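/- arXiv:2508.20222 — 6 statements merged into one kernel-verified Lean document; each statement's English description precedes it below -/
import Mathlib

section
/- Every play of the ordered Zeckendorf game on n terminates: there is no infinite sequence of legal moves starting from the initial state consisting of n copies of 1. Equivalently, every play of the game on n reaches a terminal state after finitely many moves. -/
/-- Fibonacci numbers indexed so that `F 1 = 1`, `F 2 = 2`,
and `F (i+1) = F i + F (i-1)`. -/
def F (i : ℕ) : ℕ := Nat.fib (i + 1)

/-- A single legal move of the ordered Zeckendorf game, acting on an
adjacent pair of entries of the list of indices. -/
inductive Move : List ℕ → List ℕ → Prop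
  | merge (a b : List ℕ) (i : ℕ) (hi : 1 ≤ i) :
      Move (a ++ [i, i + 1] ++ b) (a ++ [i + 2] ++ b)
  | mergeOnes (a b : List ℕ) :
      Move (a ++ [1, 1] ++ b) (a ++ [2] ++ b)
  | split (a b : List ℕ) (i : ℕ) (hi : 2 < i) :
      Move (a ++ [i, i] ++ b) (a ++ [i - 2, i + 1] ++ b)
  | splitTwos (a b : List ℕ) :
      Move (a ++ [2, 2] ++ b) (a ++ [1, 3] ++ b)
  | switch (a b : List ℕ) (i j : ℕ) (hj : 1 ≤ j) (hij : j < i) :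
      Move (a ++ [i, j] ++ b) (a ++ [j, i] ++ b)

/-- A play of the ordered Zeckendorf game on `n` with `m` moves:
the initial state is `n` copies of `1`, and each step is a legal move. -/
def IsPlay (n : ℕ) (s : ℕ → List ℕ) (m : ℕ) : Prop :=
  s 0 = List.replicate n 1 ∧ ∀ t < m, Move (s t) (s (t + 1))

/-- A state is terminal if no legal move applies to it. -/
def Terminal (S : List ℕ) : Prop := ∀ T, ¬ Move S T

/-- The total Fibonacci value of a state. -/
def val (S : List ℕ) : ℕ := (S.map F).sum

/-- The monovariant `f(S) = Σ_{j=1}^k (k+1−j)·F_{i_j}` (here with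
`j` running over 0-based positions, so the weight of position `j` is
`k − j`). -/
def f (S : List ℕ) : ℕ := ∑ j : Fin S.length, (S.length - (j : ℕ)) * F (S.get j)

/-- `M n` is the maximal number of moves in a completed play of the
ordered Zeckendorf game on `n`. -/
noncomputable def M (n : ℕ) : ℕ :=
  sSup {m | ∃ s : ℕ → List ℕ, IsPlay n s m ∧ Terminal (s m)}

/-- The golden ratio `φ = (1+√5)/2`. -/
noncomputable def phi : ℝ := (1 + Real.sqrt 5) / 2

/-- Logarithm to base `φ`. -/
noncomputable def logphi (x : ℝ) : ℝ := Real.log x / Real.log phi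

/-- Auxiliary weighted monovariant: `g S = Σ_j (|S| − j)·F (S_j)`. -/
def g : List ℕ → ℕ
  | [] => 0
  | x :: s => (s.length + 1) * F x + g s

def V (S : List ℕ) : ℕ := (S.map F).sum

lemma V_append (a b : List ℕ) : V (a ++ b) = V a + V b := by
  simp [V]

lemma g_append (a l : List ℕ) : g (a ++ l) = g a + l.length * V a + g l := by
  induction a with
  | nil => simp [g, V]
  | cons x s ih =>
    have : (x :: s) ++ l = x :: (s ++ l) := rfl
    rw [this]
    show ((s ++ l).length + 1) * F x + g (s ++ l) = (s.length + 1) * F x + g s + _ + g l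
    rw [ih, List.length_append]
    simp only [V, List.map_cons, List.sum_cons]
    ring

lemma F_pos (i : ℕ) : 0 < F i := Nat.fib_pos.2 (Nat.succ_pos i)

lemma F_add (i : ℕ) : F (i + 2) = F i + F (i + 1) := by
  simp [F, Nat.fib_add_two]

lemma F_lt (i j : ℕ) (hi : 1 ≤ i) (hij : i < j) : F i < F j := by
  calc F i < F (i + 1) := by
        unfold F; exact Nat.fib_lt_fib_succ (by omega)
    _ ≤ F j := Nat.fib_mono (by omega)

lemma move_decr {S T : List ℕ} (h : Move S T) : g T < g S := by
  cases h with
  | merge a b i hi =>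
    simp only [g_append, V_append, g, V, List.map_cons, List.map_nil, List.sum_cons,
      List.sum_nil, List.map_append, List.sum_append, List.length_cons, List.length_nil, F_add]
    have := F_pos i
    ring_nf
    nlinarith [Nat.zero_le ((List.map F a).sum)]
  | mergeOnes a b =>
    have h3 : F 2 = F 1 + F 1 := by decide
    simp only [g_append, V_append, g, V, List.map_cons, List.map_nil, List.sum_cons,
      List.sum_nil, List.map_append, List.sum_append, List.length_cons, List.length_nil, h3]
    have := F_pos 1
    ring_nf
    nlinarith [Nat.zero_le ((List.map F a).sum)]
  | split a b i hi =>
    obtain ⟨k, rfl⟩ : ∃ k, i = k + 3 := ⟨i - 3, by omega⟩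
    have h1 : k + 3 - 2 = k + 1 := by omega
    have h2 : F (k + 3) = F (k + 1) + F (k + 2) := F_add (k + 1)
    have h3 : F (k + 3 + 1) = F (k + 2) + F (k + 3) := F_add (k + 2)
    have h4 : F (k + 1) < F (k + 3) := F_lt _ _ (by omega) (by omega)
    simp only [g_append, V_append, g, V, List.map_cons, List.map_nil, List.sum_cons,
      List.sum_nil, List.map_append, List.sum_append, List.length_cons, List.length_nil, h1, h3, h2]
    ring_nf
    nlinarith [F_pos (2 + k)]
  | splitTwos a b =>
    have e1 : F 1 = 1 := by decide
    have e2 : F 2 = 2 := by decide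
    have e3 : F 3 = 3 := by decide
    simp only [g_append, V_append, g, V, List.map_cons, List.map_nil, List.sum_cons,
      List.sum_nil, List.map_append, List.sum_append, List.length_cons, List.length_nil, e1, e2, e3]
    ring_nf
    nlinarith []
  | switch a b i j hj hij =>
    have h2 : F j < F i := F_lt _ _ hj hij
    simp only [g_append, V_append, g, V, List.map_cons, List.map_nil, List.sum_cons,
      List.sum_nil, List.map_append, List.sum_append, List.length_cons, List.length_nil]
    ring_nf
    nlinarith [h2]

theorem stmt_0 (n : ℕ) :
    ¬ ∃ s : ℕ → List ℕ, s 0 = List.replicate n 1 ∧ ∀ t : ℕ, Move (s t) (s (t + 1)) := by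
  rintro ⟨s, _, hmove⟩
  have key : ∀ t : ℕ, g (s t) + t ≤ g (s 0) := by
    intro t
    induction t with
    | zero => simp
    | succ t ih =>
      have := move_decr (hmove t)
      omega
  have := key (g (s 0) + 1)
  omega
end

section
/- If a state S' of the ordered Zeckendorf game is obtained from a state S by a merge move replacing an adjacent pair (i, i+1) (with i ≥ 1) by the single entry (i+2), then f(S) − f(S') ≥ F_i. -/
lemma f_cons (x : ℕ) (s : List ℕ) : f (x :: s) = (s.length + 1) * F x + f s := by
  unfold f
  simp only [List.length_cons]
  rw [Fin.sum_univ_succ]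
  congr 1
  apply Finset.sum_congr rfl
  intro j _
  simp only [Fin.val_succ]
  congr 1
  omega

lemma F_add_two (i : ℕ) : F (i + 2) = F (i + 1) + F i := by
  simp [F, Nat.fib_add_two]; ring

lemma key (a b : List ℕ) (i : ℕ) :
    f (a ++ [i + 2] ++ b) + F i + (a.map F).sum = f (a ++ [i, i + 1] ++ b) := by
  induction a with
  | nil =>
      simp only [List.nil_append, List.map_nil, List.sum_nil, Nat.add_zero]
      rw [show ([i+2] ++ b) = (i+2) :: b from rfl,
          show ([i, i+1] ++ b) = i :: (i+1) :: b from rfl,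
          f_cons, f_cons, f_cons, F_add_two]
      simp only [List.length_cons]
      ring
  | cons x a ih =>
      rw [List.cons_append, List.cons_append, List.cons_append, List.cons_append,
          f_cons, f_cons, List.map_cons, List.sum_cons]
      simp only [List.length_append, List.length_cons, List.append_assoc, List.length_nil, Nat.add_mul, Nat.one_mul] at ih ⊢
      omega

theorem stmt_6 (a b : List ℕ) (i : ℕ) (hi : 1 ≤ i) :
    f (a ++ [i + 2] ++ b) + F i ≤ f (a ++ [i, i + 1] ++ b) := by
  have := key a b i
  omega
end

section
/- If a state S' of the ordered Zeckendorf game is obtained from a state S by a split move replacing an adjacent pair (i, i) with i > 2 by the pair (i−2, i+1), then f(S) − f(S') = F_{i−1}. -/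
theorem stmt_7 (a b : List ℕ) (i : ℕ) (hi : 2 < i) :
    f (a ++ [i, i] ++ b) = f (a ++ [i - 2, i + 1] ++ b) + F (i - 1) := by
  obtain ⟨m, rfl⟩ : ∃ m, i = m + 3 := ⟨i - 3, by omega⟩
  induction a with
  | nil =>
      have h1 : m + 3 - 2 = m + 1 := by omega
      have h2 : m + 3 + 1 = m + 4 := rfl
      have h3 : m + 3 - 1 = m + 2 := by omega
      rw [h1, h2, h3]
      simp only [List.nil_append, List.cons_append, List.length_cons, f_cons]
      have e1 : F (m + 3) = F (m + 2) + F (m + 1) := by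
        simp [F]; rw [show m+4 = m+2+2 by rfl, Nat.fib_add_two]; ring
      have e3 : F (m + 4) = F (m + 3) + F (m + 2) := by
        simp [F]; rw [show m+5 = m+3+2 by rfl, Nat.fib_add_two]; ring
      rw [e3, e1]
      ring
  | cons x a ih =>
      have hlen : (a ++ [m + 3, m + 3] ++ b).length
          = (a ++ [m + 3 - 2, m + 3 + 1] ++ b).length := by simp
      simp only [List.cons_append, f_cons, hlen, ih]
      ring
end

section
/- If a state S' of the ordered Zeckendorf game is obtained from a state S by a split-twos move replacing an adjacent pair (2, 2) by the pair (1, 3), then f(S) − f(S') = 1. -/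
theorem stmt_8 (a b : List ℕ) :
    f (a ++ [2, 2] ++ b) = f (a ++ [1, 3] ++ b) + 1 := by
  induction a with
  | nil =>
      have h1 : F 1 = 1 := rfl
      have h2 : F 2 = 2 := rfl
      have h3 : F 3 = 3 := rfl
      simp only [List.nil_append, List.cons_append, f_cons, List.length_cons, h1, h2, h3]
      ring
  | cons x a ih =>
      simp only [List.cons_append, f_cons, List.length_append, List.length_cons] at *
      omega
end

section
/- Every completed play of the ordered Zeckendorf game on n has length at least n − Z(n): any sequence of legal moves from the initial state of n copies of 1 to a terminal state contains at least n − Z(n) moves. -/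
lemma F_mono {a b : ℕ} (h : a ≤ b) : F a ≤ F b := Nat.fib_mono (by omega)
lemma F_lt_F_succ {a : ℕ} (h : 1 ≤ a) : F a < F (a+1) := Nat.fib_lt_fib_succ (by omega)
lemma val_reverse (l : List ℕ) : val l.reverse = val l := by
  simp [val, List.sum_reverse]

lemma val_cons (x : ℕ) (t : List ℕ) : val (x::t) = F x + val t := by simp [val]

lemma move_val {S T : List ℕ} (h : Move S T) : val T = val S := by
  cases h with
  | merge a b i hi => simp [val, F, Nat.fib_add_two]; ring
  | mergeOnes a b => simp [val]; norm_num [F, Nat.fib_add_two]; omega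
  | split a b i hi =>
      obtain ⟨k, rfl⟩ : ∃ k, i = k + 3 := ⟨i - 3, by omega⟩
      show val (a ++ [k + 3 - 2, k + 3 + 1] ++ b) = _
      simp [val, F, Nat.fib_add_two]; ring
  | splitTwos a b => simp [val]; norm_num [F, Nat.fib_add_two]; omega
  | switch a b i j hj hij => simp [val]; ring

lemma move_len {S T : List ℕ} (h : Move S T) : S.length ≤ T.length + 1 := by
  cases h <;> simp <;> omega

lemma move_pos {S T : List ℕ} (h : Move S T) (hp : ∀ x ∈ S, 1 ≤ x) :
    ∀ x ∈ T, 1 ≤ x := by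
  cases h with
  | merge a b i hi =>
      intro x hx; simp at hx
      rcases hx with h | h | h
      · exact hp x (by simp [h])
      · omega
      · exact hp x (by simp [h])
  | mergeOnes a b =>
      intro x hx; simp at hx
      rcases hx with h | h | h
      · exact hp x (by simp [h])
      · omega
      · exact hp x (by simp [h])
  | split a b i hi =>
      intro x hx; simp at hx
      rcases hx with h | h | h | h
      · exact hp x (by simp [h])
      · omega
      · omega
      · exact hp x (by simp [h])
  | splitTwos a b =>
      intro x hx; simp at hx
      rcases hx with h | h | h | h
      · exact hp x (by simp [h])
      · omega
      · omega
      · exact hp x (by simp [h])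
  | switch a b i j hj hij =>
      intro x hx; simp at hx
      rcases hx with h | h | h | h
      · exact hp x (by simp [h])
      · omega
      · omega
      · exact hp x (by simp [h])

lemma move_cons {S T : List ℕ} (c : ℕ) (h : Move S T) : Move (c::S) (c::T) := by
  cases h with
  | merge a b i hi => exact Move.merge (c::a) b i hi
  | mergeOnes a b => exact Move.mergeOnes (c::a) b
  | split a b i hi => exact Move.split (c::a) b i hi
  | splitTwos a b => exact Move.splitTwos (c::a) b
  | switch a b i j hj hij => exact Move.switch (c::a) b i j hj hij

lemma terminal_chain : ∀ S : List ℕ, Terminal S → (∀ x ∈ S, 1 ≤ x) →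
    List.Chain' (fun a b => a + 2 ≤ b) S
  | [], _, _ => List.isChain_nil
  | [x], _, _ => List.isChain_singleton x
  | (x :: y :: t), hT, hpos => by
      have hx : 1 ≤ x := hpos x (by simp)
      have hy : 1 ≤ y := hpos y (by simp)
      have htail : Terminal (y :: t) := fun T hM => hT (x :: T) (move_cons x hM)
      have hc := terminal_chain (y :: t) htail (fun z hz => hpos z (by simp [hz]))
      refine List.isChain_cons_cons.mpr ⟨?_, hc⟩
      by_contra hxy
      rcases lt_trichotomy x y with h | h | h
      · have hyx : y = x + 1 := by omega
        subst hyx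
        exact hT _ (Move.merge [] t x hx)
      · subst h
        rcases Nat.lt_or_ge 2 x with h2 | h2
        · exact hT _ (Move.split [] t x h2)
        · interval_cases x
          · exact hT _ (Move.mergeOnes [] t)
          · exact hT _ (Move.splitTwos [] t)
      · exact hT _ (Move.switch [] t x y hy h)

lemma val_lt : ∀ (x : ℕ) (t : List ℕ), 1 ≤ x → (∀ y ∈ t, 1 ≤ y) →
    List.Chain' (fun a b => b + 2 ≤ a) (x :: t) → val (x :: t) < F (x + 1)
  | x, [], hx, _, _ => by
      simpa [val_cons, val] using F_lt_F_succ hx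
  | x, y :: t, hx, hpos, hc => by
      have hy : 1 ≤ y := hpos y (by simp)
      have hyx : y + 2 ≤ x := (List.isChain_cons_cons.mp hc).1
      have ih := val_lt y t hy (fun z hz => hpos z (by simp [hz]))
        (List.isChain_cons_cons.mp hc).2
      have h1 : F (y+1) ≤ F (x-1) := F_mono (by omega)
      have h2 : F (x-1) + F x = F (x+1) := by
        obtain ⟨k, rfl⟩ : ∃ k, x = k + 3 := ⟨x - 3, by omega⟩
        show F (k + 3 - 2 + 1) + _ = _
        simp [F, Nat.fib_add_two]
      have := val_cons x (y :: t)
      omega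

lemma desc_unique : ∀ (l1 l2 : List ℕ), (∀ x ∈ l1, 1 ≤ x) →
    List.Chain' (fun a b => b + 2 ≤ a) l1 → (∀ x ∈ l2, 1 ≤ x) →
    List.Chain' (fun a b => b + 2 ≤ a) l2 → val l1 = val l2 → l1 = l2
  | [], [], _, _, _, _, _ => rfl
  | [], h2 :: t2, _, _, hp2, _, hv => by
      have := F_pos h2
      have := val_cons h2 t2
      simp [val] at hv; omega
  | h1 :: t1, [], hp1, _, _, _, hv => by
      have := F_pos h1
      have := val_cons h1 t1
      simp [val] at hv; omega
  | h1 :: t1, h2 :: t2, hp1, hc1, hp2, hc2, hv => by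
      have hh1 : 1 ≤ h1 := hp1 h1 (by simp)
      have hh2 : 1 ≤ h2 := hp2 h2 (by simp)
      have hp1' : ∀ x ∈ t1, 1 ≤ x := fun z hz => hp1 z (by simp [hz])
      have hp2' : ∀ x ∈ t2, 1 ≤ x := fun z hz => hp2 z (by simp [hz])
      have hlt1 := val_lt h1 t1 hh1 hp1' hc1
      have hlt2 := val_lt h2 t2 hh2 hp2' hc2
      have hge1 : F h1 ≤ val (h1 :: t1) := by rw [val_cons]; omega
      have hge2 : F h2 ≤ val (h2 :: t2) := by rw [val_cons]; omega
      have heq : h1 = h2 := by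
        rcases lt_trichotomy h1 h2 with h | h | h
        · have := F_mono (show h1 + 1 ≤ h2 by omega); omega
        · exact h
        · have := F_mono (show h2 + 1 ≤ h1 by omega); omega
      subst heq
      have hvt : val t1 = val t2 := by
        have e1 := val_cons h1 t1; have e2 := val_cons h1 t2; omega
      have := desc_unique t1 t2 hp1' (hc1.tail) hp2' (hc2.tail) hvt
      rw [this]

theorem stmt_11 (n : ℕ) (L : List ℕ)
    (hpos : ∀ x ∈ L, 1 ≤ x)
    (hgap : List.Chain' (fun a b => a + 2 ≤ b) L)
    (hsum : val L = n)
    (s : ℕ → List ℕ) (m : ℕ) (hplay : IsPlay n s m) (hterm : Terminal (s m)) :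
    n - L.length ≤ m := by
  obtain ⟨h0, hstep⟩ := hplay
  have key : ∀ t ≤ m, val (s t) = n ∧ (∀ x ∈ s t, 1 ≤ x) ∧ n ≤ (s t).length + t := by
    intro t
    induction t with
    | zero =>
        intro _
        rw [h0]
        refine ⟨?_, ?_, ?_⟩ <;> simp [val, F]
    | succ t ih =>
        intro ht
        obtain ⟨hv, hp, hl⟩ := ih (by omega)
        have hm := hstep t (by omega)
        exact ⟨by rw [move_val hm, hv], move_pos hm hp,
          by have := move_len hm; omega⟩
  obtain ⟨hv, hp, hl⟩ := key m le_rfl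
  have hc := terminal_chain (s m) hterm hp
  have hrev : (s m).reverse = L.reverse := by
    apply desc_unique
    · intro x hx; exact hp x (List.mem_reverse.mp hx)
    · exact List.isChain_reverse.mpr hc
    · intro x hx; exact hpos x (List.mem_reverse.mp hx)
    · exact List.isChain_reverse.mpr hgap
    · rw [val_reverse, val_reverse]; omega
  have hlen : (s m).length = L.length := by
    have := congrArg List.length hrev
    simpa using this
  omega
end

section
/- The maximal game length of the ordered Zeckendorf game is asymptotically n²/2: the ratio M(n)/(n²/2) converges to 1 as n → ∞. -/
/-!
Every move strictly decreases the monovariant `f`, which starts at `n(n+1)/2`; hence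
`M n ≤ n(n+1)/2`. For the lower bound add `indexVal S = Σ i·F_i` to get the potential
`f + indexVal`, which starts at `n(n+1)/2 + n`. There is a play along which every move lowers
the potential by at most one: fold the ones into twos, then repeatedly turn two twos into a
three, walk it through the remaining twos and carry it into a strictly increasing tail of
indices, like a Zeckendorf counter. This play reaches a state `1^e 2^b R` with `e, b ≤ 1` and
`R` strictly increasing, whose indices are `O(log n)`; so its potential is `O(n log n)` and the
play has `n²/2 - O(n log n)` moves.
-/

namespace OrderedZeckendorf

open List Filter Topology

section Paths

variable {α : Type*} {r : α → α → Prop}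

inductive Steps (r : α → α → Prop) : ℕ → α → α → Prop
  | refl (a : α) : Steps r 0 a a
  | cons {k : ℕ} {a b c : α} : r a b → Steps r k b c → Steps r (k + 1) a c

namespace Steps

lemma single {a b : α} (h : r a b) : Steps r 1 a b := cons h (refl b)

lemma trans {j k : ℕ} {a b c : α} (h₁ : Steps r j a b) (h₂ : Steps r k b c) :
    Steps r (j + k) a c := by
  induction h₁ with
  | refl => simpa using h₂
  | cons h _ ih => simpa [Nat.add_right_comm] using cons h (ih h₂)

lemma mono {s : α → α → Prop} (hrs : ∀ a b, r a b → s a b) {k : ℕ} {a b : α}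
    (h : Steps r k a b) : Steps s k a b := by
  induction h with
  | refl => exact refl _
  | cons h _ ih => exact cons (hrs _ _ h) ih

lemma eq_of_invariant {μ : α → ℕ} (hμ : ∀ a b, r a b → μ b = μ a) {k : ℕ} {a b : α}
    (h : Steps r k a b) : μ b = μ a := by
  induction h with
  | refl => rfl
  | cons h _ ih => rw [ih, hμ _ _ h]

lemma add_le_of_strictAnti {μ : α → ℕ} (hμ : ∀ a b, r a b → μ b < μ a) {k : ℕ} {a b : α}
    (h : Steps r k a b) : μ b + k ≤ μ a := by
  induction h with
  | refl => simp
  | cons h _ ih => have := hμ _ _ h; omega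

lemma le_add_of_le_succ {μ : α → ℕ} (hμ : ∀ a b, r a b → μ a ≤ μ b + 1) {k : ℕ} {a b : α}
    (h : Steps r k a b) : μ a ≤ μ b + k := by
  induction h with
  | refl => simp
  | cons h _ ih => have := hμ _ _ h; omega

lemma of_seq (s : ℕ → α) {k : ℕ} (h : ∀ t < k, r (s t) (s (t + 1))) :
    Steps r k (s 0) (s k) := by
  induction k with
  | zero => exact refl _
  | succ k ih => exact (ih fun t ht => h t (by omega)).trans (single (h k (by omega)))

lemma exists_seq {k : ℕ} {a b : α} (h : Steps r k a b) :
    ∃ s : ℕ → α, s 0 = a ∧ s k = b ∧ ∀ t < k, r (s t) (s (t + 1)) := by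
  induction h with
  | refl a => exact ⟨fun _ => a, rfl, rfl, by simp⟩
  | @cons k a b c h _ ih =>
    obtain ⟨s, hs₀, hsk, hs⟩ := ih
    refine ⟨fun t => if t = 0 then a else s (t - 1), rfl, by simpa using hsk, ?_⟩
    rintro (_ | t) ht
    · simpa [hs₀] using h
    · simpa using hs t (by omega)

lemma exists_normal_form {μ : α → ℕ} (hμ : ∀ a b, r a b → μ b < μ a) (a : α) :
    ∃ k b, Steps r k a b ∧ ∀ c, ¬ r b c := by
  induction h : μ a using Nat.strong_induction_on generalizing a with
  | _ m ih =>
    by_cases hb : ∃ b, r a b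
    · obtain ⟨b, hab⟩ := hb
      obtain ⟨k, c, hbc, hc⟩ := ih (μ b) (h ▸ hμ a b hab) b rfl
      exact ⟨k + 1, c, cons hab hbc, hc⟩
    · exact ⟨0, a, refl a, fun c hc => hb ⟨c, hc⟩⟩

end Steps

end Paths

section Swap

variable {α : Type*} {r : List α → List α → Prop} {x y : α}

lemma Steps.swap_right (h : ∀ u v, r (u ++ [x, y] ++ v) (u ++ [y, x] ++ v)) (m : ℕ)
    (u v : List α) :
    Steps r m (u ++ [x] ++ replicate m y ++ v) (u ++ replicate m y ++ [x] ++ v) := by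
  induction m generalizing u with
  | zero => simpa using Steps.refl (u ++ x :: v)
  | succ m ih =>
    have h₁ :
        r (u ++ [x] ++ replicate (m + 1) y ++ v) (u ++ [y] ++ [x] ++ replicate m y ++ v) := by
      simpa [replicate_succ] using h u (replicate m y ++ v)
    simpa [replicate_succ] using Steps.cons h₁ (ih (u ++ [y]))

lemma Steps.swap_left (h : ∀ u v, r (u ++ [x, y] ++ v) (u ++ [y, x] ++ v)) (m : ℕ)
    (u v : List α) :
    Steps r m (u ++ replicate m x ++ [y] ++ v) (u ++ [y] ++ replicate m x ++ v) := by
  induction m generalizing u with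
  | zero => simpa using Steps.refl (u ++ y :: v)
  | succ m ih =>
    have h₁ :
        r (u ++ [x] ++ [y] ++ replicate m x ++ v) (u ++ [y] ++ replicate (m + 1) x ++ v) := by
      simpa [replicate_succ] using h u (replicate m x ++ v)
    simpa [replicate_succ] using (ih (u ++ [x])).trans (Steps.single h₁)

end Swap

section Fibonacci

lemma F_add_two (i : ℕ) : F (i + 2) = F (i + 1) + F i := by
  simp only [F, show i + 2 + 1 = i + 1 + 2 by ring, Nat.fib_add_two, add_comm]

lemma F_pos (i : ℕ) : 0 < F i := Nat.fib_pos.2 i.succ_pos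

lemma F_mono : Monotone F := fun _ _ h => Nat.fib_mono (by omega)

lemma F_lt_F {i j : ℕ} (hj : 1 ≤ j) (hij : j < i) : F j < F i :=
  (Nat.fib_lt_fib (by omega)).2 (by omega)

@[simp] lemma F_one : F 1 = 1 := rfl
@[simp] lemma F_two : F 2 = 2 := rfl
@[simp] lemma F_three : F 3 = 3 := rfl

lemma two_pow_le_F_two_mul (k : ℕ) : 2 ^ k ≤ F (2 * k) := by
  induction k with
  | zero => simp [F]
  | succ k ih =>
    have h := F_add_two (2 * k)
    have := F_mono (show 2 * k ≤ 2 * k + 1 by omega)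
    rw [pow_succ, show 2 * (k + 1) = 2 * k + 2 by ring]
    omega

lemma le_two_mul_log_of_F_le {x n : ℕ} (h : F x ≤ n) : x ≤ 2 * Nat.log 2 n + 2 := by
  by_contra! hx
  have := two_pow_le_F_two_mul (Nat.log 2 n + 1)
  have := F_mono (show 2 * (Nat.log 2 n + 1) ≤ x by omega)
  have := Nat.lt_pow_succ_log_self (show 1 < 2 by norm_num) n
  omega

end Fibonacci

section Weights

@[simp] lemma val_nil : val [] = 0 := rfl

@[simp] lemma val_cons (x : ℕ) (S : List ℕ) : val (x :: S) = F x + val S := rfl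

@[simp] lemma val_append (S T : List ℕ) : val (S ++ T) = val S + val T := by
  simp [val]

@[simp] lemma val_replicate_one (n : ℕ) : val (replicate n 1) = n := by
  simp [val]

lemma F_le_val {x : ℕ} {S : List ℕ} (hx : x ∈ S) : F x ≤ val S :=
  List.le_sum_of_mem (List.mem_map_of_mem hx)

@[simp] lemma f_nil : f [] = 0 := rfl

@[simp] lemma f_cons (x : ℕ) (S : List ℕ) : f (x :: S) = (S.length + 1) * F x + f S := by
  simp [f, Fin.sum_univ_succ]

lemma f_append (S T : List ℕ) : f (S ++ T) = f S + T.length * val S + f T := by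
  induction S with
  | nil => simp
  | cons x S ih => simp only [cons_append, f_cons, ih, length_append, val_cons]; ring

lemma f_le_length_mul_val (S : List ℕ) : f S ≤ S.length * val S := by
  induction S with
  | nil => simp
  | cons x S ih => simp only [f_cons, length_cons, val_cons]; nlinarith

lemma two_mul_f_replicate_one (n : ℕ) : 2 * f (replicate n 1) = n * (n + 1) := by
  induction n with
  | zero => simp
  | succ n ih => simp only [replicate_succ, f_cons, length_replicate, F_one]; nlinarith

def indexVal (S : List ℕ) : ℕ := (S.map fun x => x * F x).sum

@[simp] lemma indexVal_append (S T : List ℕ) : indexVal (S ++ T) = indexVal S + indexVal T := by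
  simp [indexVal]

@[simp] lemma indexVal_replicate_one (n : ℕ) : indexVal (replicate n 1) = n := by
  simp [indexVal]

lemma indexVal_le {B : ℕ} {S : List ℕ} (h : ∀ x ∈ S, x ≤ B) : indexVal S ≤ B * val S := by
  induction S with
  | nil => simp [indexVal]
  | cons x S ih =>
    have hx := h x mem_cons_self
    have := ih fun y hy => h y (mem_cons_of_mem x hy)
    simp only [indexVal, map_cons, sum_cons, val_cons] at this ⊢
    nlinarith

def potential (S : List ℕ) : ℕ := f S + indexVal S

lemma potential_append_le {v P Q : List ℕ} (hval : val P = val Q)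
    (h : potential P ≤ potential Q + 1) : potential (P ++ v) ≤ potential (Q ++ v) + 1 := by
  simp only [potential, f_append, indexVal_append, hval] at h ⊢
  omega

lemma potential_append_append_le {u v P Q : List ℕ} (hlen : P.length = Q.length)
    (hval : val P = val Q) (h : potential P ≤ potential Q + 1) :
    potential (u ++ P ++ v) ≤ potential (u ++ Q ++ v) + 1 := by
  simp only [potential, f_append, indexVal_append, val_append, hlen, hval] at h ⊢
  omega

end Weights

section Moves

lemma f_append_append_lt {u v P Q : List ℕ} (hlen : Q.length ≤ P.length) (hval : val Q = val P)
    (h : f Q < f P) : f (u ++ Q ++ v) < f (u ++ P ++ v) := by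
  simp only [f_append, val_append, hval]
  nlinarith [Nat.mul_le_mul_right (val u) hlen]

lemma F_sub_two_add_F_succ {i : ℕ} (hi : 2 < i) : F (i - 2) + F (i + 1) = F i + F i := by
  obtain ⟨d, rfl⟩ : ∃ d, i = d + 3 := ⟨i - 3, by omega⟩
  have h₄ : F (d + 4) = F (d + 3) + F (d + 2) := F_add_two (d + 2)
  have h₃ : F (d + 3) = F (d + 2) + F (d + 1) := F_add_two (d + 1)
  simp only [show d + 3 - 2 = d + 1 by omega, h₄, h₃]
  omega

lemma val_eq_of_move {S T : List ℕ} (h : Move S T) : val T = val S := by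
  cases h with
  | merge a b i => simp [F_add_two]; ring
  | mergeOnes a b => simp; ring
  | split a b i hi => simp only [val_append, val_cons, val_nil]; linarith [F_sub_two_add_F_succ hi]
  | splitTwos a b => simp; ring
  | switch a b i j => simp; ring

lemma f_lt_of_move {S T : List ℕ} (h : Move S T) : f T < f S := by
  cases h with
  | merge a b i =>
    refine f_append_append_lt (by simp) (by simp [F_add_two]; ring) ?_
    simp only [f_cons, f_nil, length_cons, length_nil, F_add_two]
    linarith [F_pos i]
  | mergeOnes a b => exact f_append_append_lt (by simp) (by simp) (by decide)
  | split a b i hi =>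
    refine f_append_append_lt (by simp) (by simp; linarith [F_sub_two_add_F_succ hi]) ?_
    have := F_sub_two_add_F_succ hi
    have := F_lt_F (show 1 ≤ i - 2 by omega) (show i - 2 < i by omega)
    simp only [f_cons, f_nil, length_cons, length_nil]
    omega
  | splitTwos a b => exact f_append_append_lt (by simp) (by simp) (by decide)
  | switch a b i j hj hij =>
    refine f_append_append_lt (by simp) (by simp; ring) ?_
    have := F_lt_F hj hij
    simp only [f_cons, f_nil, length_cons, length_nil]
    omega

end Moves

section GoodMoves

def GoodMove (S T : List ℕ) : Prop := Move S T ∧ potential S ≤ potential T + 1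

lemma goodMove_switch {i j : ℕ} (hj : 1 ≤ j) (hij : j < i) (hF : F i ≤ F j + 1) (u v : List ℕ) :
    GoodMove (u ++ [i, j] ++ v) (u ++ [j, i] ++ v) := by
  refine ⟨.switch u v i j hj hij, potential_append_append_le rfl (by simp; ring) ?_⟩
  simp only [potential, indexVal, f_cons, f_nil, length_cons, length_nil, map_cons, map_nil,
    sum_cons, sum_nil]
  omega

lemma goodMove_split {i : ℕ} (hi : 2 < i) (u v : List ℕ) :
    GoodMove (u ++ [i, i] ++ v) (u ++ [i - 2, i + 1] ++ v) := by
  refine ⟨.split u v i hi,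
    potential_append_append_le rfl (by simp; linarith [F_sub_two_add_F_succ hi]) ?_⟩
  obtain ⟨d, rfl⟩ : ∃ d, i = d + 3 := ⟨i - 3, by omega⟩
  have h₄ : F (d + 4) = F (d + 3) + F (d + 2) := F_add_two (d + 2)
  have h₃ : F (d + 3) = F (d + 2) + F (d + 1) := F_add_two (d + 1)
  have h₂ : F (d + 2) = F (d + 1) + F d := F_add_two d
  have := Nat.mul_le_mul_left d (F_mono (show d + 1 ≤ d + 2 by omega))
  simp only [potential, indexVal, f_cons, f_nil, length_cons, length_nil, map_cons, map_nil,
    sum_cons, sum_nil, show d + 3 - 2 = d + 1 by omega, h₄]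
  nlinarith

lemma goodMove_splitTwos (u v : List ℕ) : GoodMove (u ++ [2, 2] ++ v) (u ++ [1, 3] ++ v) :=
  ⟨.splitTwos u v, potential_append_append_le rfl (by decide) (by decide)⟩

lemma goodMove_mergeOnes (v : List ℕ) : GoodMove (1 :: 1 :: v) (2 :: v) :=
  ⟨by simpa using Move.mergeOnes [] v, potential_append_le (P := [1, 1]) (Q := [2]) (by decide)
    (by decide)⟩

lemma goodMove_merge_one_two (v : List ℕ) : GoodMove (1 :: 2 :: v) (3 :: v) :=
  ⟨by simpa using Move.merge [] v 1 le_rfl, potential_append_le (P := [1, 2]) (Q := [3])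
    (by decide) (by decide)⟩

end GoodMoves

section Strategy

def stage (e b : ℕ) (R : List ℕ) : List ℕ := replicate e 1 ++ replicate b 2 ++ R

def IsTail (R : List ℕ) : Prop := R.Pairwise (· < ·) ∧ ∀ x ∈ R, 3 ≤ x

def carry : ℕ → List ℕ → List ℕ
  | c, [] => [c]
  | c, t :: T => if c = t then (c - 2) :: carry (c + 1) T else c :: t :: T

lemma exists_steps_carry (u T : List ℕ) {c : ℕ} (hc : 3 ≤ c) :
    ∃ k, Steps GoodMove k (u ++ c :: T) (u ++ carry c T) := by
  induction T generalizing u c with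
  | nil => exact ⟨0, Steps.refl _⟩
  | cons t T ih =>
    by_cases hct : c = t
    · subst hct
      obtain ⟨k, hk⟩ : ∃ k, Steps GoodMove k (u ++ [c - 2] ++ (c + 1) :: T)
          (u ++ [c - 2] ++ carry (c + 1) T) := ih _ (by omega)
      have h₁ := Steps.single (goodMove_split (i := c) (by omega) u T)
      simp only [append_assoc, cons_append, nil_append] at h₁ hk
      exact ⟨1 + k, by simpa [carry] using h₁.trans hk⟩
    · exact ⟨0, by simpa [carry, hct] using Steps.refl _⟩

lemma pairwise_carry {T : List ℕ} {c : ℕ} (hc : 3 ≤ c) (hT : ∀ x ∈ T, c ≤ x)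
    (hP : T.Pairwise (· < ·)) : (carry c T).Pairwise (· < ·) ∧ ∀ x ∈ carry c T, c - 2 ≤ x := by
  induction T generalizing c with
  | nil => simp [carry]
  | cons t T ih =>
    rw [pairwise_cons] at hP
    by_cases hct : c = t
    · subst hct
      obtain ⟨hP', hge⟩ := ih (by omega) (fun x hx => hP.1 x hx) hP.2
      simp only [carry, if_pos, pairwise_cons, mem_cons, forall_eq_or_imp]
      refine ⟨⟨fun x hx => ?_, hP'⟩, le_rfl, fun x hx => ?_⟩ <;> have := hge x hx <;> omega
    · have hct' : c < t := lt_of_le_of_ne (hT t mem_cons_self) hct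
      simp only [carry, hct, if_false, pairwise_cons, mem_cons, forall_eq_or_imp]
      refine ⟨⟨⟨by omega, fun x hx => by have := hP.1 x hx; omega⟩, hP⟩, by omega, by omega,
        fun x hx => by have := hT x (mem_cons_of_mem t hx); omega⟩

lemma exists_stage_eq {L : List ℕ} (hP : L.Pairwise (· < ·)) (h₂ : ∀ x ∈ L, 2 ≤ x) (e b : ℕ) :
    ∃ b' R, stage e b L = stage e b' R ∧ IsTail R := by
  rcases L with _ | ⟨x, L⟩
  · exact ⟨b, [], rfl, by simp [IsTail]⟩
  rw [pairwise_cons] at hP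
  by_cases hx : x = 2
  · subst hx
    refine ⟨b + 1, L, by simp [stage, replicate_succ'], hP.2, fun y hy => ?_⟩
    have := hP.1 y hy
    omega
  · refine ⟨b, x :: L, rfl, pairwise_cons.2 hP, ?_⟩
    have := h₂ x mem_cons_self
    simp only [mem_cons, forall_eq_or_imp]
    exact ⟨by omega, fun y hy => by have := hP.1 y hy; omega⟩

lemma exists_steps_stage_one_cons {e : ℕ} (he : e ≤ 1) (b : ℕ) (L : List ℕ) :
    ∃ k e' b', e' ≤ 1 ∧ Steps GoodMove k (stage e b (1 :: L)) (stage e' b' L) := by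
  have hswap := Steps.swap_left (goodMove_switch (i := 2) (j := 1) le_rfl one_lt_two le_rfl)
    b (replicate e 1) L
  interval_cases e
  · exact ⟨b, 1, b, le_rfl, by simpa [stage] using hswap⟩
  · refine ⟨b + 1, 0, b + 1, zero_le_one, ?_⟩
    simpa [stage, replicate_succ] using hswap.trans (Steps.single (goodMove_mergeOnes _))

lemma exists_steps_stage_isTail_of_pairwise {e : ℕ} (he : e ≤ 1) (b : ℕ) {L : List ℕ}
    (hP : L.Pairwise (· < ·)) (h₁ : ∀ x ∈ L, 1 ≤ x) :
    ∃ k e' b' R, e' ≤ 1 ∧ IsTail R ∧ Steps GoodMove k (stage e b L) (stage e' b' R) := by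
  rcases L with _ | ⟨x, L⟩
  · exact ⟨0, e, b, [], he, by simp [IsTail], Steps.refl _⟩
  rw [pairwise_cons] at hP
  by_cases hx : x = 1
  · subst hx
    obtain ⟨k, e', b', he', hk⟩ := exists_steps_stage_one_cons he b L
    obtain ⟨b'', R, hR, hTail⟩ := exists_stage_eq hP.2 (fun y hy => hP.1 y hy) e' b'
    exact ⟨k, e', b'', R, he', hTail, hR ▸ hk⟩
  · have h₂ : ∀ y ∈ x :: L, 2 ≤ y := by
      have := h₁ x mem_cons_self
      simp only [mem_cons, forall_eq_or_imp]
      exact ⟨by omega, fun y hy => by have := hP.1 y hy; omega⟩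
    obtain ⟨b', R, hR, hTail⟩ := exists_stage_eq (pairwise_cons.2 hP) h₂ e b
    exact ⟨0, e, b', R, he, hTail, hR ▸ Steps.refl _⟩

lemma exists_steps_stage_three_cons {e b : ℕ} (he : e ≤ 1) (hb : 2 ≤ b) (R : List ℕ) :
    ∃ k e' b', 1 ≤ k ∧ e' ≤ 1 ∧ Steps GoodMove k (stage e b R) (stage e' b' (3 :: R)) := by
  have hswap := Steps.swap_right (goodMove_switch (i := 3) (j := 2) one_le_two (by norm_num)
    (by decide))
  obtain ⟨b, rfl⟩ : ∃ b', b = b' + 1 := ⟨b - 1, by omega⟩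
  interval_cases e
  · obtain ⟨b, rfl⟩ : ∃ b', b = b' + 1 := ⟨b - 1, by omega⟩
    have h₂ := hswap b [1] R
    simp only [cons_append, append_assoc] at h₂
    refine ⟨1 + b, 1, b, by omega, le_rfl, ?_⟩
    simpa [stage, replicate_succ] using
      (Steps.single (goodMove_splitTwos [] (replicate b 2 ++ R))).trans h₂
  · have h₂ := hswap b [] R
    simp only [nil_append, cons_append, append_assoc] at h₂
    refine ⟨1 + b, 0, b, by omega, zero_le_one, ?_⟩
    simpa [stage, replicate_succ] using
      (Steps.single (goodMove_merge_one_two (replicate b 2 ++ R))).trans h₂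

lemma exists_pos_steps_stage_isTail {e b : ℕ} {R : List ℕ} (he : e ≤ 1) (hb : 2 ≤ b)
    (hR : IsTail R) : ∃ k e' b' R', 1 ≤ k ∧ e' ≤ 1 ∧ IsTail R' ∧
      Steps GoodMove k (stage e b R) (stage e' b' R') := by
  obtain ⟨k₁, e₁, b₁, hk₁, he₁, h₁⟩ := exists_steps_stage_three_cons he hb R
  obtain ⟨k₂, h₂⟩ := exists_steps_carry (replicate e₁ 1 ++ replicate b₁ 2) R le_rfl
  obtain ⟨hP, hge⟩ := pairwise_carry le_rfl hR.2 hR.1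
  obtain ⟨k₃, e', b', R', he', hR', h₃⟩ := exists_steps_stage_isTail_of_pairwise he₁ b₁ hP hge
  exact ⟨k₁ + k₂ + k₃, e', b', R', by omega, he', hR', (h₁.trans h₂).trans h₃⟩

lemma exists_steps_stage_twos_le_one {e b : ℕ} {R : List ℕ} (he : e ≤ 1) (hR : IsTail R) :
    ∃ k e' b' R', e' ≤ 1 ∧ b' ≤ 1 ∧ IsTail R' ∧
      Steps GoodMove k (stage e b R) (stage e' b' R') := by
  induction h : f (stage e b R) using Nat.strong_induction_on generalizing e b R with
  | _ m ih =>
    by_cases hb : b ≤ 1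
    · exact ⟨0, e, b, R, he, hb, hR, Steps.refl _⟩
    obtain ⟨k, e₁, b₁, R₁, hk, he₁, hR₁, h₁⟩ :=
      exists_pos_steps_stage_isTail (b := b) he (by omega) hR
    have hf := h₁.add_le_of_strictAnti fun _ _ h => f_lt_of_move h.1
    obtain ⟨k', e', b', R', he', hb', hR', h'⟩ :=
      ih (f (stage e₁ b₁ R₁)) (by omega) he₁ hR₁ rfl
    exact ⟨k + k', e', b', R', he', hb', hR', h₁.trans h'⟩

lemma exists_steps_stage_ones_le_one (a c : ℕ) (R : List ℕ) :
    ∃ k e b, e ≤ 1 ∧ Steps GoodMove k (stage a c R) (stage e b R) := by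
  induction a using Nat.strong_induction_on generalizing c with
  | _ a ih =>
    by_cases ha : a ≤ 1
    · exact ⟨0, a, c, ha, Steps.refl _⟩
    obtain ⟨a, rfl⟩ : ∃ a', a = a' + 2 := ⟨a - 2, by omega⟩
    have hswap := Steps.swap_right (goodMove_switch (i := 2) (j := 1) le_rfl one_lt_two le_rfl)
      a [] (replicate c 2 ++ R)
    simp only [nil_append, cons_append, append_assoc] at hswap
    have h₁ : Steps GoodMove (1 + a) (stage (a + 2) c R) (stage a (c + 1) R) := by
      simpa [stage, replicate_succ] using
        (Steps.single (goodMove_mergeOnes (replicate a 1 ++ (replicate c 2 ++ R)))).trans hswap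
    obtain ⟨k, e, b, he, h₂⟩ := ih a (by omega) (c + 1)
    exact ⟨1 + a + k, e, b, he, h₁.trans h₂⟩

lemma exists_steps_replicate_one_stage (n : ℕ) :
    ∃ k e b R, e ≤ 1 ∧ b ≤ 1 ∧ IsTail R ∧ Steps GoodMove k (replicate n 1) (stage e b R) := by
  obtain ⟨k₁, e₁, b₁, he₁, h₁⟩ := exists_steps_stage_ones_le_one n 0 []
  obtain ⟨k₂, e, b, R, he, hb, hR, h₂⟩ :=
    exists_steps_stage_twos_le_one he₁ (b := b₁) (R := []) (by simp [IsTail])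
  exact ⟨k₁ + k₂, e, b, R, he, hb, hR, by simpa [stage] using h₁.trans h₂⟩

end Strategy

section Bounds

lemma length_le_of_pairwise_lt {B : ℕ} {R : List ℕ} (hP : R.Pairwise (· < ·))
    (hB : ∀ x ∈ R, x ≤ B) : R.length ≤ B + 1 := by
  have hsub : R.toFinset ⊆ Finset.range (B + 1) := fun x hx =>
    Finset.mem_range.2 (Nat.lt_succ_of_le (hB x (mem_toFinset.1 hx)))
  simpa [toFinset_card_of_nodup (hP.imp ne_of_lt)] using Finset.card_le_card hsub

lemma potential_stage_le {e b n : ℕ} {R : List ℕ} (he : e ≤ 1) (hb : b ≤ 1) (hR : IsTail R)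
    (hval : val (stage e b R) = n) : potential (stage e b R) ≤ (4 * Nat.log 2 n + 7) * n := by
  have hB : ∀ x ∈ stage e b R, x ≤ 2 * Nat.log 2 n + 2 := fun x hx =>
    le_two_mul_log_of_F_le (hval ▸ F_le_val hx)
  have hlen : (stage e b R).length ≤ 2 * Nat.log 2 n + 5 := by
    have := length_le_of_pairwise_lt hR.1 fun x hx => hB x (by simp [stage, hx])
    simp only [stage, length_append, length_replicate]
    omega
  have h₁ := f_le_length_mul_val (stage e b R)
  have h₂ := indexVal_le hB
  rw [hval] at h₁ h₂
  have := Nat.mul_le_mul_right n hlen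
  unfold potential
  nlinarith

lemma le_f_of_isPlay {n m : ℕ} {s : ℕ → List ℕ} (h : IsPlay n s m) : m ≤ f (replicate n 1) := by
  have := (Steps.of_seq s h.2).add_le_of_strictAnti fun _ _ h => f_lt_of_move h
  rw [h.1] at this
  omega

lemma two_mul_M_le (n : ℕ) : 2 * M n ≤ n * (n + 1) := by
  have : M n ≤ f (replicate n 1) := csSup_le' fun _ ⟨_, hs, _⟩ => le_f_of_isPlay hs
  have := two_mul_f_replicate_one n
  omega

lemma le_M_of_steps {n k : ℕ} {T : List ℕ} (h : Steps Move k (replicate n 1) T)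
    (hT : Terminal T) : k ≤ M n := by
  obtain ⟨s, hs₀, hsk, hs⟩ := h.exists_seq
  exact le_csSup ⟨f (replicate n 1), fun _ ⟨_, hs, _⟩ => le_f_of_isPlay hs⟩
    ⟨s, ⟨hs₀, hs⟩, hsk ▸ hT⟩

lemma le_two_mul_M (n : ℕ) : n * (n + 1) ≤ 2 * M n + (8 * Nat.log 2 n + 14) * n := by
  obtain ⟨k, e, b, R, he, hb, hR, h⟩ := exists_steps_replicate_one_stage n
  have hval : val (stage e b R) = n := by
    simpa using h.eq_of_invariant fun _ _ h => val_eq_of_move h.1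
  have hk := h.le_add_of_le_succ fun _ _ h => h.2
  obtain ⟨j, T, hT, hterm⟩ :=
    Steps.exists_normal_form (fun _ _ h => f_lt_of_move h) (stage e b R)
  have hM := le_M_of_steps ((h.mono fun _ _ h => h.1).trans hT) hterm
  have hend := potential_stage_le he hb hR hval
  have := two_mul_f_replicate_one n
  simp only [potential, indexVal_replicate_one] at hk hend
  nlinarith

lemma tendsto_natLog_div_atTop : Tendsto (fun n : ℕ => (Nat.log 2 n : ℝ) / n) atTop (𝓝 0) := by
  have h := (Real.isLittleO_log_id_atTop.tendsto_div_nhds_zero.comp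
    tendsto_natCast_atTop_atTop).div_const (Real.log 2)
  refine tendsto_of_tendsto_of_tendsto_of_le_of_le tendsto_const_nhds (by simpa using h)
    (fun n => by positivity) fun n => ?_
  calc (Nat.log 2 n : ℝ) / n ≤ Real.logb 2 n / n :=
        div_le_div_of_nonneg_right (by exact_mod_cast Real.natLog_le_logb n 2) n.cast_nonneg
    _ = Real.log n / n / Real.log 2 := by rw [Real.logb]; ring

lemma M_div_le {n : ℕ} (hn : 0 < n) : (M n : ℝ) / ((n : ℝ) ^ 2 / 2) ≤ 1 + 1 / (n : ℝ) := by
  have : (2 * M n : ℝ) ≤ n * (n + 1) := by exact_mod_cast two_mul_M_le n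
  rw [div_le_iff₀ (by positivity)]
  have : (1 + 1 / (n : ℝ)) * (n ^ 2 / 2) = n * (n + 1) / 2 := by field_simp
  linarith

lemma le_M_div {n : ℕ} (hn : 0 < n) :
    1 - (8 * ((Nat.log 2 n : ℝ) / n) + 14 * (1 / n)) ≤ (M n : ℝ) / ((n : ℝ) ^ 2 / 2) := by
  have : (n * (n + 1) : ℝ) ≤ 2 * M n + (8 * Nat.log 2 n + 14) * n := by
    exact_mod_cast le_two_mul_M n
  rw [le_div_iff₀ (by positivity)]
  have : (1 - (8 * ((Nat.log 2 n : ℝ) / n) + 14 * (1 / n))) * (n ^ 2 / 2) =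
      n ^ 2 / 2 - (4 * Nat.log 2 n + 7) * n := by
    field_simp
    ring
  nlinarith

end Bounds

end OrderedZeckendorf

open OrderedZeckendorf Filter Topology in
theorem stmt_17 :
    Filter.Tendsto (fun n : ℕ => (M n : ℝ) / ((n : ℝ) ^ 2 / 2))
      Filter.atTop (nhds 1) := by
  have h₀ : Tendsto (fun n : ℕ => 1 / (n : ℝ)) atTop (𝓝 0) := tendsto_one_div_atTop_nhds_zero_nat
  have hlow : Tendsto (fun n : ℕ => 1 - (8 * ((Nat.log 2 n : ℝ) / n) + 14 * (1 / n))) atTop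
      (𝓝 1) := by
    simpa using ((tendsto_natLog_div_atTop.const_mul 8).add (h₀.const_mul 14)).const_sub 1
  have hup : Tendsto (fun n : ℕ => 1 + 1 / (n : ℝ)) atTop (𝓝 1) := by
    simpa using h₀.const_add 1
  exact tendsto_of_tendsto_of_tendsto_of_le_of_le' hlow hup
    (eventually_gt_atTop 0 |>.mono fun _ => le_M_div)
    (eventually_gt_atTop 0 |>.mono fun _ => M_div_le)
end
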